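/- Two-dimensional integration-by-parts identity for the chemostat generator: let Lφ(s,b) = f₁(s,b)φ'_s + f₂(s,b)φ'_b + (c₁²/2)s·φ''_{ss} + (c₂²/2)b·φ''_{bb} and L*p(s,b) = −[f₁ p]'_s − [f₂ p]'_b + (c₁²/2)[s p]''_{ss} + (c₂²/2)[b p]''_{bb}. If p and φ are smooth on [0,∞)² with compact support, φ vanishes on {s = 0}, f₂(s,0) = 0 for all s, and all functions and their relevant derivatives are integrable, then ∫∫ p·Lφ ds db = ∫∫ (L*p)·φ ds db + (c₂²/2)∫₀^∞ p(s,0)·φ(s,0) ds. -/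

import Mathlib

open MeasureTheory Set Function

noncomputable def pd (v : ℝ × ℝ) (G : ℝ × ℝ → ℝ) : ℝ × ℝ → ℝ :=
  fun q => fderiv ℝ G q v

lemma pd_contDiff (v : ℝ × ℝ) {G : ℝ × ℝ → ℝ} (hG : ContDiff ℝ (⊤ : ℕ∞) G) :
    ContDiff ℝ (⊤ : ℕ∞) (pd v G) :=
  (hG.fderiv_right (by simp)).clm_apply contDiff_const

lemma pd_continuous (v : ℝ × ℝ) {G : ℝ × ℝ → ℝ} (hG : ContDiff ℝ (⊤ : ℕ∞) G) :
    Continuous (pd v G) :=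
  (pd_contDiff v hG).continuous

lemma pd_hcs (v : ℝ × ℝ) {G : ℝ × ℝ → ℝ} (hG : HasCompactSupport G) :
    HasCompactSupport (pd v G) :=
  hG.fderiv_apply ℝ v

lemma hasDerivAt_slice_fst {G : ℝ × ℝ → ℝ} (hG : ContDiff ℝ (⊤ : ℕ∞) G) (s b : ℝ) :
    HasDerivAt (fun u => G (u, b)) (pd (1, 0) G (s, b)) s :=
  ((hG.differentiable (by simp)) (s, b)).hasFDerivAt.comp_hasDerivAt s
    ((hasDerivAt_id s).prodMk (hasDerivAt_const s b))

lemma hasDerivAt_slice_snd {G : ℝ × ℝ → ℝ} (hG : ContDiff ℝ (⊤ : ℕ∞) G) (s b : ℝ) :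
    HasDerivAt (fun v => G (s, v)) (pd (0, 1) G (s, b)) b :=
  ((hG.differentiable (by simp)) (s, b)).hasFDerivAt.comp_hasDerivAt b
    ((hasDerivAt_const b s).prodMk (hasDerivAt_id b))

lemma deriv_slice_fst {G : ℝ × ℝ → ℝ} (hG : ContDiff ℝ (⊤ : ℕ∞) G) (s b : ℝ) :
    deriv (fun u => G (u, b)) s = pd (1, 0) G (s, b) :=
  (hasDerivAt_slice_fst hG s b).deriv

lemma deriv_slice_snd {G : ℝ × ℝ → ℝ} (hG : ContDiff ℝ (⊤ : ℕ∞) G) (s b : ℝ) :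
    deriv (fun v => G (s, v)) b = pd (0, 1) G (s, b) :=
  (hasDerivAt_slice_snd hG s b).deriv

lemma contDiff_slice_fst {G : ℝ × ℝ → ℝ} (hG : ContDiff ℝ (⊤ : ℕ∞) G) (b : ℝ) :
    ContDiff ℝ (⊤ : ℕ∞) (fun s => G (s, b)) :=
  hG.comp (contDiff_id.prodMk contDiff_const)

lemma contDiff_slice_snd {G : ℝ × ℝ → ℝ} (hG : ContDiff ℝ (⊤ : ℕ∞) G) (s : ℝ) :
    ContDiff ℝ (⊤ : ℕ∞) (fun b => G (s, b)) :=
  hG.comp (contDiff_const.prodMk contDiff_id)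

lemma hcs_slice_fst {G : ℝ × ℝ → ℝ} (hG : HasCompactSupport G) (b : ℝ) :
    HasCompactSupport (fun s => G (s, b)) := by
  have hsub : tsupport (fun s => G (s, b)) ⊆ Prod.fst '' tsupport G := by
    apply closure_minimal ?_ ((hG.image continuous_fst).isClosed)
    intro s hs
    exact ⟨(s, b), subset_closure hs, rfl⟩
  exact IsCompact.of_isClosed_subset (hG.image continuous_fst) (isClosed_tsupport _) hsub

lemma hcs_slice_snd {G : ℝ × ℝ → ℝ} (hG : HasCompactSupport G) (s : ℝ) :
    HasCompactSupport (fun b => G (s, b)) := by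
  have hsub : tsupport (fun b => G (s, b)) ⊆ Prod.snd '' tsupport G := by
    apply closure_minimal ?_ ((hG.image continuous_snd).isClosed)
    intro b hb
    exact ⟨(s, b), subset_closure hb, rfl⟩
  exact IsCompact.of_isClosed_subset (hG.image continuous_snd) (isClosed_tsupport _) hsub

lemma ibp_mul {g h : ℝ → ℝ} (hg : ContDiff ℝ (⊤ : ℕ∞) g) (hh : ContDiff ℝ (⊤ : ℕ∞) h)
    (hgc : HasCompactSupport g) (hhc : HasCompactSupport h) :
    ∫ x in Set.Ioi (0 : ℝ), g x * deriv h x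
      = -(g 0 * h 0) - ∫ x in Set.Ioi (0 : ℝ), deriv g x * h x := by
  have hgh : ContDiff ℝ 1 (fun x => g x * h x) := (hg.mul hh).of_le (by simp)
  have hghc : HasCompactSupport (fun x => g x * h x) := hgc.mul_right
  have h0 := hghc.integral_Ioi_deriv_eq hgh 0
  have hd : (fun x => deriv (fun y => g y * h y) x)
      = fun x => deriv g x * h x + g x * deriv h x := by
    funext x
    exact deriv_mul (hg.differentiable (by simp) x) (hh.differentiable (by simp) x)
  rw [hd] at h0
  have i1 : Integrable (fun x => deriv g x * h x) (volume.restrict (Set.Ioi (0 : ℝ))) :=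
    (((hg.continuous_deriv (by simp)).mul hh.continuous).integrable_of_hasCompactSupport
      hhc.mul_left).integrableOn
  have i2 : Integrable (fun x => g x * deriv h x) (volume.restrict (Set.Ioi (0 : ℝ))) :=
    ((hg.continuous.mul (hh.continuous_deriv (by simp))).integrable_of_hasCompactSupport
      hgc.mul_right).integrableOn
  rw [integral_add i1 i2] at h0
  linarith

lemma integrable_prod_restrict {f : ℝ × ℝ → ℝ} (hc : Continuous f) (hs : HasCompactSupport f) :
    Integrable f ((volume.restrict (Set.Ioi (0 : ℝ))).prod (volume.restrict (Set.Ioi (0 : ℝ)))) := by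
  rw [Measure.prod_restrict]
  have : Integrable f (volume : Measure (ℝ × ℝ)) := hc.integrable_of_hasCompactSupport hs
  rw [Measure.volume_eq_prod] at this
  exact this.restrict

lemma ibpB {G H : ℝ × ℝ → ℝ} (hG : ContDiff ℝ (⊤ : ℕ∞) G) (hH : ContDiff ℝ (⊤ : ℕ∞) H)
    (hGc : HasCompactSupport G) (hHc : HasCompactSupport H) :
    ∫ q, G q * pd (0, 1) H q
        ∂((volume.restrict (Set.Ioi (0 : ℝ))).prod (volume.restrict (Set.Ioi (0 : ℝ))))
      = -(∫ s in Set.Ioi (0 : ℝ), G (s, 0) * H (s, 0))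
        - ∫ q, pd (0, 1) G q * H q
            ∂((volume.restrict (Set.Ioi (0 : ℝ))).prod (volume.restrict (Set.Ioi (0 : ℝ)))) := by
  have intL : Integrable (fun q => G q * pd (0, 1) H q)
      ((volume.restrict (Set.Ioi (0 : ℝ))).prod (volume.restrict (Set.Ioi (0 : ℝ)))) :=
    integrable_prod_restrict (hG.continuous.mul (pd_continuous _ hH)) hGc.mul_right
  have intR : Integrable (fun q => pd (0, 1) G q * H q)
      ((volume.restrict (Set.Ioi (0 : ℝ))).prod (volume.restrict (Set.Ioi (0 : ℝ)))) :=
    integrable_prod_restrict ((pd_continuous _ hG).mul hH.continuous) hHc.mul_left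
  rw [MeasureTheory.integral_prod _ intL, MeasureTheory.integral_prod _ intR]
  have key : ∀ s : ℝ, (∫ b in Set.Ioi (0 : ℝ), G (s, b) * pd (0, 1) H (s, b))
      = -(G (s, 0) * H (s, 0)) - ∫ b in Set.Ioi (0 : ℝ), pd (0, 1) G (s, b) * H (s, b) := by
    intro s
    have e1 : ∀ b : ℝ, pd (0, 1) H (s, b) = deriv (fun v => H (s, v)) b :=
      fun b => (deriv_slice_snd hH s b).symm
    have e2 : ∀ b : ℝ, pd (0, 1) G (s, b) = deriv (fun v => G (s, v)) b :=
      fun b => (deriv_slice_snd hG s b).symm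
    simp only [e1, e2]
    exact ibp_mul (contDiff_slice_snd hG s) (contDiff_slice_snd hH s)
      (hcs_slice_snd hGc s) (hcs_slice_snd hHc s)
  have hb : Integrable (fun s => G (s, 0) * H (s, 0)) (volume.restrict (Set.Ioi (0 : ℝ))) := by
    refine (Continuous.integrable_of_hasCompactSupport ?_ ?_).integrableOn
    · exact (hG.continuous.comp (continuous_id.prodMk continuous_const)).mul
        (hH.continuous.comp (continuous_id.prodMk continuous_const))
    · exact (hcs_slice_fst hGc 0).mul_right
  have hi : Integrable (fun s => ∫ b in Set.Ioi (0 : ℝ), pd (0, 1) G (s, b) * H (s, b))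
      (volume.restrict (Set.Ioi (0 : ℝ))) := intR.integral_prod_left
  calc (∫ s in Set.Ioi (0 : ℝ), ∫ b in Set.Ioi (0 : ℝ), G (s, b) * pd (0, 1) H (s, b))
      = ∫ s in Set.Ioi (0 : ℝ),
          (-(G (s, 0) * H (s, 0)) - ∫ b in Set.Ioi (0 : ℝ), pd (0, 1) G (s, b) * H (s, b)) :=
        integral_congr_ae (Filter.Eventually.of_forall key)
    _ = -(∫ s in Set.Ioi (0 : ℝ), G (s, 0) * H (s, 0))
        - ∫ s in Set.Ioi (0 : ℝ), ∫ b in Set.Ioi (0 : ℝ), pd (0, 1) G (s, b) * H (s, b) := by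
        rw [integral_sub (f := fun s => -(G (s, 0) * H (s, 0))) hb.neg hi, integral_neg]

lemma ibpS {G H : ℝ × ℝ → ℝ} (hG : ContDiff ℝ (⊤ : ℕ∞) G) (hH : ContDiff ℝ (⊤ : ℕ∞) H)
    (hGc : HasCompactSupport G) (hHc : HasCompactSupport H) :
    ∫ q, G q * pd (1, 0) H q
        ∂((volume.restrict (Set.Ioi (0 : ℝ))).prod (volume.restrict (Set.Ioi (0 : ℝ))))
      = -(∫ b in Set.Ioi (0 : ℝ), G (0, b) * H (0, b))
        - ∫ q, pd (1, 0) G q * H q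
            ∂((volume.restrict (Set.Ioi (0 : ℝ))).prod (volume.restrict (Set.Ioi (0 : ℝ)))) := by
  have intL : Integrable (fun q => G q * pd (1, 0) H q)
      ((volume.restrict (Set.Ioi (0 : ℝ))).prod (volume.restrict (Set.Ioi (0 : ℝ)))) :=
    integrable_prod_restrict (hG.continuous.mul (pd_continuous _ hH)) hGc.mul_right
  have intR : Integrable (fun q => pd (1, 0) G q * H q)
      ((volume.restrict (Set.Ioi (0 : ℝ))).prod (volume.restrict (Set.Ioi (0 : ℝ)))) :=
    integrable_prod_restrict ((pd_continuous _ hG).mul hH.continuous) hHc.mul_left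
  rw [MeasureTheory.integral_prod_symm _ intL, MeasureTheory.integral_prod_symm _ intR]
  have key : ∀ b : ℝ, (∫ s in Set.Ioi (0 : ℝ), G (s, b) * pd (1, 0) H (s, b))
      = -(G (0, b) * H (0, b)) - ∫ s in Set.Ioi (0 : ℝ), pd (1, 0) G (s, b) * H (s, b) := by
    intro b
    have e1 : ∀ s : ℝ, pd (1, 0) H (s, b) = deriv (fun u => H (u, b)) s :=
      fun s => (deriv_slice_fst hH s b).symm
    have e2 : ∀ s : ℝ, pd (1, 0) G (s, b) = deriv (fun u => G (u, b)) s :=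
      fun s => (deriv_slice_fst hG s b).symm
    simp only [e1, e2]
    exact ibp_mul (contDiff_slice_fst hG b) (contDiff_slice_fst hH b)
      (hcs_slice_fst hGc b) (hcs_slice_fst hHc b)
  have hb : Integrable (fun b => G (0, b) * H (0, b)) (volume.restrict (Set.Ioi (0 : ℝ))) := by
    refine (Continuous.integrable_of_hasCompactSupport ?_ ?_).integrableOn
    · exact (hG.continuous.comp (continuous_const.prodMk continuous_id)).mul
        (hH.continuous.comp (continuous_const.prodMk continuous_id))
    · exact (hcs_slice_snd hGc 0).mul_right
  have hi : Integrable (fun b => ∫ s in Set.Ioi (0 : ℝ), pd (1, 0) G (s, b) * H (s, b))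
      (volume.restrict (Set.Ioi (0 : ℝ))) := intR.integral_prod_right
  calc (∫ b in Set.Ioi (0 : ℝ), ∫ s in Set.Ioi (0 : ℝ), G (s, b) * pd (1, 0) H (s, b))
      = ∫ b in Set.Ioi (0 : ℝ),
          (-(G (0, b) * H (0, b)) - ∫ s in Set.Ioi (0 : ℝ), pd (1, 0) G (s, b) * H (s, b)) :=
        integral_congr_ae (Filter.Eventually.of_forall key)
    _ = -(∫ b in Set.Ioi (0 : ℝ), G (0, b) * H (0, b))
        - ∫ b in Set.Ioi (0 : ℝ), ∫ s in Set.Ioi (0 : ℝ), pd (1, 0) G (s, b) * H (s, b) := by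
        rw [integral_sub (f := fun b => -(G (0, b) * H (0, b))) hb.neg hi, integral_neg]

lemma main_aux (c d : ℝ) (G1 G2 G3 G4 Φ : ℝ × ℝ → ℝ)
    (h1 : ContDiff ℝ (⊤ : ℕ∞) G1) (h2 : ContDiff ℝ (⊤ : ℕ∞) G2) (h3 : ContDiff ℝ (⊤ : ℕ∞) G3)
    (h4 : ContDiff ℝ (⊤ : ℕ∞) G4) (hΦ : ContDiff ℝ (⊤ : ℕ∞) Φ)
    (h1c : HasCompactSupport G1) (h2c : HasCompactSupport G2) (h3c : HasCompactSupport G3)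
    (h4c : HasCompactSupport G4) (hΦc : HasCompactSupport Φ)
    (hΦ0 : ∀ b : ℝ, Φ (0, b) = 0) (hG20 : ∀ s : ℝ, G2 (s, 0) = 0)
    (hG30 : ∀ b : ℝ, G3 (0, b) = 0) (hG40 : ∀ s : ℝ, G4 (s, 0) = 0) :
    ∫ q, (G1 q * pd (1, 0) Φ q + G2 q * pd (0, 1) Φ q
        + c * (G3 q * pd (1, 0) (pd (1, 0) Φ) q)
        + d * (G4 q * pd (0, 1) (pd (0, 1) Φ) q))
        ∂((volume.restrict (Set.Ioi (0 : ℝ))).prod (volume.restrict (Set.Ioi (0 : ℝ))))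
      = (∫ q, ((-(pd (1, 0) G1 q) - pd (0, 1) G2 q
            + c * pd (1, 0) (pd (1, 0) G3) q
            + d * pd (0, 1) (pd (0, 1) G4) q) * Φ q)
          ∂((volume.restrict (Set.Ioi (0 : ℝ))).prod (volume.restrict (Set.Ioi (0 : ℝ)))))
        + d * ∫ s in Set.Ioi (0 : ℝ), pd (0, 1) G4 (s, 0) * Φ (s, 0) := by
  set π := (volume.restrict (Set.Ioi (0 : ℝ))).prod (volume.restrict (Set.Ioi (0 : ℝ))) with hπ
  -- integrabilities
  have iT1 : Integrable (fun q => G1 q * pd (1, 0) Φ q) π :=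
    integrable_prod_restrict (h1.continuous.mul (pd_continuous _ hΦ)) h1c.mul_right
  have iT2 : Integrable (fun q => G2 q * pd (0, 1) Φ q) π :=
    integrable_prod_restrict (h2.continuous.mul (pd_continuous _ hΦ)) h2c.mul_right
  have iT3 : Integrable (fun q => G3 q * pd (1, 0) (pd (1, 0) Φ) q) π :=
    integrable_prod_restrict (h3.continuous.mul (pd_continuous _ (pd_contDiff _ hΦ)))
      h3c.mul_right
  have iT4 : Integrable (fun q => G4 q * pd (0, 1) (pd (0, 1) Φ) q) π :=
    integrable_prod_restrict (h4.continuous.mul (pd_continuous _ (pd_contDiff _ hΦ)))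
      h4c.mul_right
  have iA1 : Integrable (fun q => pd (1, 0) G1 q * Φ q) π :=
    integrable_prod_restrict ((pd_continuous _ h1).mul hΦ.continuous) hΦc.mul_left
  have iA2 : Integrable (fun q => pd (0, 1) G2 q * Φ q) π :=
    integrable_prod_restrict ((pd_continuous _ h2).mul hΦ.continuous) hΦc.mul_left
  have iA3 : Integrable (fun q => pd (1, 0) (pd (1, 0) G3) q * Φ q) π :=
    integrable_prod_restrict ((pd_continuous _ (pd_contDiff _ h3)).mul hΦ.continuous)
      hΦc.mul_left
  have iA4 : Integrable (fun q => pd (0, 1) (pd (0, 1) G4) q * Φ q) π :=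
    integrable_prod_restrict ((pd_continuous _ (pd_contDiff _ h4)).mul hΦ.continuous)
      hΦc.mul_left
  -- the four integration-by-parts identities
  have e1 : (∫ q, G1 q * pd (1, 0) Φ q ∂π) = -∫ q, pd (1, 0) G1 q * Φ q ∂π := by
    rw [hπ, ibpS h1 hΦ h1c hΦc]
    have hb : (∫ b in Set.Ioi (0 : ℝ), G1 (0, b) * Φ (0, b)) = 0 := by
      simp [hΦ0]
    rw [hb]; ring
  have e2 : (∫ q, G2 q * pd (0, 1) Φ q ∂π) = -∫ q, pd (0, 1) G2 q * Φ q ∂π := by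
    rw [hπ, ibpB h2 hΦ h2c hΦc]
    have hb : (∫ s in Set.Ioi (0 : ℝ), G2 (s, 0) * Φ (s, 0)) = 0 := by
      simp [hG20]
    rw [hb]; ring
  have e3 : (∫ q, G3 q * pd (1, 0) (pd (1, 0) Φ) q ∂π)
      = ∫ q, pd (1, 0) (pd (1, 0) G3) q * Φ q ∂π := by
    rw [hπ, ibpS h3 (pd_contDiff _ hΦ) h3c (pd_hcs _ hΦc),
      ibpS (pd_contDiff _ h3) hΦ (pd_hcs _ h3c) hΦc]
    have hb1 : (∫ b in Set.Ioi (0 : ℝ), G3 (0, b) * pd (1, 0) Φ (0, b)) = 0 := by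
      simp [hG30]
    have hb2 : (∫ b in Set.Ioi (0 : ℝ), pd (1, 0) G3 (0, b) * Φ (0, b)) = 0 := by
      simp [hΦ0]
    rw [hb1, hb2]; ring
  have e4 : (∫ q, G4 q * pd (0, 1) (pd (0, 1) Φ) q ∂π)
      = (∫ q, pd (0, 1) (pd (0, 1) G4) q * Φ q ∂π)
        + ∫ s in Set.Ioi (0 : ℝ), pd (0, 1) G4 (s, 0) * Φ (s, 0) := by
    rw [hπ, ibpB h4 (pd_contDiff _ hΦ) h4c (pd_hcs _ hΦc),
      ibpB (pd_contDiff _ h4) hΦ (pd_hcs _ h4c) hΦc]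
    have hb1 : (∫ s in Set.Ioi (0 : ℝ), G4 (s, 0) * pd (0, 1) Φ (s, 0)) = 0 := by
      simp [hG40]
    rw [hb1]; ring
  -- splitting the left-hand side
  have hsplitL : (∫ q, (G1 q * pd (1, 0) Φ q + G2 q * pd (0, 1) Φ q
        + c * (G3 q * pd (1, 0) (pd (1, 0) Φ) q)
        + d * (G4 q * pd (0, 1) (pd (0, 1) Φ) q)) ∂π)
      = (∫ q, G1 q * pd (1, 0) Φ q ∂π) + (∫ q, G2 q * pd (0, 1) Φ q ∂π)
        + c * (∫ q, G3 q * pd (1, 0) (pd (1, 0) Φ) q ∂π)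
        + d * (∫ q, G4 q * pd (0, 1) (pd (0, 1) Φ) q ∂π) := by
    rw [integral_add (f := fun q => G1 q * pd (1, 0) Φ q + G2 q * pd (0, 1) Φ q
          + c * (G3 q * pd (1, 0) (pd (1, 0) Φ) q))
        (g := fun q => d * (G4 q * pd (0, 1) (pd (0, 1) Φ) q))
        ((iT1.add iT2).add (iT3.const_mul c)) (iT4.const_mul d),
      integral_add (f := fun q => G1 q * pd (1, 0) Φ q + G2 q * pd (0, 1) Φ q)
        (g := fun q => c * (G3 q * pd (1, 0) (pd (1, 0) Φ) q))
        (iT1.add iT2) (iT3.const_mul c),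
      integral_add (f := fun q => G1 q * pd (1, 0) Φ q)
        (g := fun q => G2 q * pd (0, 1) Φ q) iT1 iT2,
      integral_const_mul c, integral_const_mul d]
  -- splitting the right-hand side
  have hR : (fun q => (-(pd (1, 0) G1 q) - pd (0, 1) G2 q
          + c * pd (1, 0) (pd (1, 0) G3) q + d * pd (0, 1) (pd (0, 1) G4) q) * Φ q)
      = fun q => (-(pd (1, 0) G1 q * Φ q) - pd (0, 1) G2 q * Φ q
          + c * (pd (1, 0) (pd (1, 0) G3) q * Φ q)
          + d * (pd (0, 1) (pd (0, 1) G4) q * Φ q)) := funext fun q => by ring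
  have hsplitR : (∫ q, ((-(pd (1, 0) G1 q) - pd (0, 1) G2 q
          + c * pd (1, 0) (pd (1, 0) G3) q + d * pd (0, 1) (pd (0, 1) G4) q) * Φ q) ∂π)
      = -(∫ q, pd (1, 0) G1 q * Φ q ∂π) - (∫ q, pd (0, 1) G2 q * Φ q ∂π)
        + c * (∫ q, pd (1, 0) (pd (1, 0) G3) q * Φ q ∂π)
        + d * (∫ q, pd (0, 1) (pd (0, 1) G4) q * Φ q ∂π) := by
    rw [hR,
      integral_add (f := fun q => -(pd (1, 0) G1 q * Φ q) - pd (0, 1) G2 q * Φ q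
          + c * (pd (1, 0) (pd (1, 0) G3) q * Φ q))
        (g := fun q => d * (pd (0, 1) (pd (0, 1) G4) q * Φ q))
        ((iA1.neg'.sub iA2).add (iA3.const_mul c)) (iA4.const_mul d),
      integral_add (f := fun q => -(pd (1, 0) G1 q * Φ q) - pd (0, 1) G2 q * Φ q)
        (g := fun q => c * (pd (1, 0) (pd (1, 0) G3) q * Φ q))
        (iA1.neg'.sub iA2) (iA3.const_mul c),
      integral_sub (f := fun q => -(pd (1, 0) G1 q * Φ q))
        (g := fun q => pd (0, 1) G2 q * Φ q) iA1.neg' iA2,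
      integral_neg, integral_const_mul c, integral_const_mul d]
  rw [hsplitL, hsplitR, e1, e2, e3, e4]
  ring

theorem chemostat_generator_adjoint (c₁ c₂ : ℝ) (hc₁ : 0 < c₁) (hc₂ : 0 < c₂)
    (f₁ f₂ p φ : ℝ → ℝ → ℝ)
    (hf₁ : ContDiff ℝ (⊤ : ℕ∞) (Function.uncurry f₁))
    (hf₂ : ContDiff ℝ (⊤ : ℕ∞) (Function.uncurry f₂))
    (hp : ContDiff ℝ (⊤ : ℕ∞) (Function.uncurry p))
    (hφ : ContDiff ℝ (⊤ : ℕ∞) (Function.uncurry φ))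
    (hpc : HasCompactSupport (Function.uncurry p))
    (hφc : HasCompactSupport (Function.uncurry φ))
    (hφ0 : ∀ b, φ 0 b = 0) (hf₂0 : ∀ s, f₂ s 0 = 0) :
    ∫ s in Set.Ioi (0 : ℝ), ∫ b in Set.Ioi (0 : ℝ),
        p s b * (f₁ s b * deriv (fun u => φ u b) s
          + f₂ s b * deriv (fun v => φ s v) b
          + c₁ ^ 2 / 2 * s * deriv (fun u => deriv (fun u' => φ u' b) u) s
          + c₂ ^ 2 / 2 * b * deriv (fun v => deriv (fun v' => φ s v') v) b)
      = (∫ s in Set.Ioi (0 : ℝ), ∫ b in Set.Ioi (0 : ℝ),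
          (-(deriv (fun u => f₁ u b * p u b) s)
            - deriv (fun v => f₂ s v * p s v) b
            + c₁ ^ 2 / 2 * deriv (fun u => deriv (fun u' => u' * p u' b) u) s
            + c₂ ^ 2 / 2 * deriv (fun v => deriv (fun v' => v' * p s v') v) b)
            * φ s b)
        + c₂ ^ 2 / 2 * ∫ s in Set.Ioi (0 : ℝ), p s 0 * φ s 0 := by
  have hG1 : ContDiff ℝ (⊤ : ℕ∞) (fun q : ℝ × ℝ => f₁ q.1 q.2 * p q.1 q.2) := hf₁.mul hp
  have hG2 : ContDiff ℝ (⊤ : ℕ∞) (fun q : ℝ × ℝ => f₂ q.1 q.2 * p q.1 q.2) := hf₂.mul hp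
  have hG3 : ContDiff ℝ (⊤ : ℕ∞) (fun q : ℝ × ℝ => q.1 * p q.1 q.2) := contDiff_fst.mul hp
  have hG4 : ContDiff ℝ (⊤ : ℕ∞) (fun q : ℝ × ℝ => q.2 * p q.1 q.2) := contDiff_snd.mul hp
  have hG1c : HasCompactSupport (fun q : ℝ × ℝ => f₁ q.1 q.2 * p q.1 q.2) :=
    HasCompactSupport.mul_left (f := fun q : ℝ × ℝ => f₁ q.1 q.2) hpc
  have hG2c : HasCompactSupport (fun q : ℝ × ℝ => f₂ q.1 q.2 * p q.1 q.2) :=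
    HasCompactSupport.mul_left (f := fun q : ℝ × ℝ => f₂ q.1 q.2) hpc
  have hG3c : HasCompactSupport (fun q : ℝ × ℝ => q.1 * p q.1 q.2) :=
    HasCompactSupport.mul_left (f := fun q : ℝ × ℝ => q.1) hpc
  have hG4c : HasCompactSupport (fun q : ℝ × ℝ => q.2 * p q.1 q.2) :=
    HasCompactSupport.mul_left (f := fun q : ℝ × ℝ => q.2) hpc
  -- derivative conversions for the left-hand side
  have hd1 : ∀ s b : ℝ, deriv (fun u => φ u b) s = pd (1, 0) (uncurry φ) (s, b) :=
    fun s b => deriv_slice_fst hφ s b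
  have hd2 : ∀ s b : ℝ, deriv (fun v => φ s v) b = pd (0, 1) (uncurry φ) (s, b) :=
    fun s b => deriv_slice_snd hφ s b
  have hd3 : ∀ s b : ℝ, deriv (fun u => deriv (fun u' => φ u' b) u) s
      = pd (1, 0) (pd (1, 0) (uncurry φ)) (s, b) := by
    intro s b
    have hin : (fun u => deriv (fun u' => φ u' b) u)
        = fun u => pd (1, 0) (uncurry φ) (u, b) := funext fun u => hd1 u b
    rw [hin]
    exact deriv_slice_fst (pd_contDiff _ hφ) s b
  have hd4 : ∀ s b : ℝ, deriv (fun v => deriv (fun v' => φ s v') v) b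
      = pd (0, 1) (pd (0, 1) (uncurry φ)) (s, b) := by
    intro s b
    have hin : (fun v => deriv (fun v' => φ s v') v)
        = fun v => pd (0, 1) (uncurry φ) (s, v) := funext fun v => hd2 s v
    rw [hin]
    exact deriv_slice_snd (pd_contDiff _ hφ) s b
  -- derivative conversions for the right-hand side
  have hd5 : ∀ s b : ℝ, deriv (fun u => f₁ u b * p u b) s
      = pd (1, 0) (fun q : ℝ × ℝ => f₁ q.1 q.2 * p q.1 q.2) (s, b) :=
    fun s b => deriv_slice_fst hG1 s b
  have hd6 : ∀ s b : ℝ, deriv (fun v => f₂ s v * p s v) b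
      = pd (0, 1) (fun q : ℝ × ℝ => f₂ q.1 q.2 * p q.1 q.2) (s, b) :=
    fun s b => deriv_slice_snd hG2 s b
  have hd7a : ∀ s b : ℝ, deriv (fun u' => u' * p u' b) s
      = pd (1, 0) (fun q : ℝ × ℝ => q.1 * p q.1 q.2) (s, b) :=
    fun s b => deriv_slice_fst hG3 s b
  have hd7 : ∀ s b : ℝ, deriv (fun u => deriv (fun u' => u' * p u' b) u) s
      = pd (1, 0) (pd (1, 0) (fun q : ℝ × ℝ => q.1 * p q.1 q.2)) (s, b) := by
    intro s b
    have hin : (fun u => deriv (fun u' => u' * p u' b) u)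
        = fun u => pd (1, 0) (fun q : ℝ × ℝ => q.1 * p q.1 q.2) (u, b) :=
      funext fun u => hd7a u b
    rw [hin]
    exact deriv_slice_fst (pd_contDiff _ hG3) s b
  have hd8a : ∀ s b : ℝ, deriv (fun v' => v' * p s v') b
      = pd (0, 1) (fun q : ℝ × ℝ => q.2 * p q.1 q.2) (s, b) :=
    fun s b => deriv_slice_snd hG4 s b
  have hd8 : ∀ s b : ℝ, deriv (fun v => deriv (fun v' => v' * p s v') v) b
      = pd (0, 1) (pd (0, 1) (fun q : ℝ × ℝ => q.2 * p q.1 q.2)) (s, b) := by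
    intro s b
    have hin : (fun v => deriv (fun v' => v' * p s v') v)
        = fun v => pd (0, 1) (fun q : ℝ × ℝ => q.2 * p q.1 q.2) (s, v) :=
      funext fun v => hd8a s v
    rw [hin]
    exact deriv_slice_snd (pd_contDiff _ hG4) s b
  -- pointwise identification of the integrands
  have hLpt : ∀ s b : ℝ,
      p s b * (f₁ s b * deriv (fun u => φ u b) s
          + f₂ s b * deriv (fun v => φ s v) b
          + c₁ ^ 2 / 2 * s * deriv (fun u => deriv (fun u' => φ u' b) u) s
          + c₂ ^ 2 / 2 * b * deriv (fun v => deriv (fun v' => φ s v') v) b)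
        = f₁ s b * p s b * pd (1, 0) (uncurry φ) (s, b)
          + f₂ s b * p s b * pd (0, 1) (uncurry φ) (s, b)
          + c₁ ^ 2 / 2 * (s * p s b * pd (1, 0) (pd (1, 0) (uncurry φ)) (s, b))
          + c₂ ^ 2 / 2 * (b * p s b * pd (0, 1) (pd (0, 1) (uncurry φ)) (s, b)) := by
    intro s b
    rw [hd1 s b, hd2 s b, hd3 s b, hd4 s b]; ring
  have hRpt : ∀ s b : ℝ,
      (-(deriv (fun u => f₁ u b * p u b) s)
            - deriv (fun v => f₂ s v * p s v) b
            + c₁ ^ 2 / 2 * deriv (fun u => deriv (fun u' => u' * p u' b) u) s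
            + c₂ ^ 2 / 2 * deriv (fun v => deriv (fun v' => v' * p s v') v) b)
            * φ s b
        = (-(pd (1, 0) (fun q : ℝ × ℝ => f₁ q.1 q.2 * p q.1 q.2) (s, b))
            - pd (0, 1) (fun q : ℝ × ℝ => f₂ q.1 q.2 * p q.1 q.2) (s, b)
            + c₁ ^ 2 / 2 * pd (1, 0) (pd (1, 0) (fun q : ℝ × ℝ => q.1 * p q.1 q.2)) (s, b)
            + c₂ ^ 2 / 2 * pd (0, 1) (pd (0, 1) (fun q : ℝ × ℝ => q.2 * p q.1 q.2)) (s, b))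
            * φ s b := by
    intro s b
    rw [hd5 s b, hd6 s b, hd7 s b, hd8 s b]
  -- joint integrabilities
  have intL : Integrable (fun q : ℝ × ℝ =>
      f₁ q.1 q.2 * p q.1 q.2 * pd (1, 0) (uncurry φ) q
        + f₂ q.1 q.2 * p q.1 q.2 * pd (0, 1) (uncurry φ) q
        + c₁ ^ 2 / 2 * (q.1 * p q.1 q.2 * pd (1, 0) (pd (1, 0) (uncurry φ)) q)
        + c₂ ^ 2 / 2 * (q.2 * p q.1 q.2 * pd (0, 1) (pd (0, 1) (uncurry φ)) q))
      ((volume.restrict (Set.Ioi (0 : ℝ))).prod (volume.restrict (Set.Ioi (0 : ℝ)))) := by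
    refine (((integrable_prod_restrict (hG1.continuous.mul (pd_continuous _ hφ))
        hG1c.mul_right).add
      (integrable_prod_restrict (hG2.continuous.mul (pd_continuous _ hφ))
        hG2c.mul_right)).add
      ((integrable_prod_restrict (hG3.continuous.mul (pd_continuous _ (pd_contDiff _ hφ)))
        hG3c.mul_right).const_mul _)).add
      ((integrable_prod_restrict (hG4.continuous.mul (pd_continuous _ (pd_contDiff _ hφ)))
        hG4c.mul_right).const_mul _)
  have intR : Integrable (fun q : ℝ × ℝ =>
      (-(pd (1, 0) (fun q : ℝ × ℝ => f₁ q.1 q.2 * p q.1 q.2) q)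
          - pd (0, 1) (fun q : ℝ × ℝ => f₂ q.1 q.2 * p q.1 q.2) q
          + c₁ ^ 2 / 2 * pd (1, 0) (pd (1, 0) (fun q : ℝ × ℝ => q.1 * p q.1 q.2)) q
          + c₂ ^ 2 / 2 * pd (0, 1) (pd (0, 1) (fun q : ℝ × ℝ => q.2 * p q.1 q.2)) q)
          * uncurry φ q)
      ((volume.restrict (Set.Ioi (0 : ℝ))).prod (volume.restrict (Set.Ioi (0 : ℝ)))) :=
    integrable_prod_restrict
      ((((((pd_continuous _ hG1).neg.sub (pd_continuous _ hG2)).add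
        (continuous_const.mul (pd_continuous _ (pd_contDiff _ hG3)))).add
        (continuous_const.mul (pd_continuous _ (pd_contDiff _ hG4))))).mul hφ.continuous)
      hφc.mul_left
  -- the main identity from main_aux
  have main := main_aux (c₁ ^ 2 / 2) (c₂ ^ 2 / 2)
    (fun q : ℝ × ℝ => f₁ q.1 q.2 * p q.1 q.2)
    (fun q : ℝ × ℝ => f₂ q.1 q.2 * p q.1 q.2)
    (fun q : ℝ × ℝ => q.1 * p q.1 q.2)
    (fun q : ℝ × ℝ => q.2 * p q.1 q.2)
    (uncurry φ) hG1 hG2 hG3 hG4 hφ hG1c hG2c hG3c hG4c hφc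
    (fun b => hφ0 b)
    (fun s => by simp [hf₂0 s])
    (fun b => by simp)
    (fun s => by simp)
  -- boundary term identification
  have hbdry : (∫ s in Set.Ioi (0 : ℝ),
        pd (0, 1) (fun q : ℝ × ℝ => q.2 * p q.1 q.2) (s, 0) * uncurry φ (s, 0))
      = ∫ s in Set.Ioi (0 : ℝ), p s 0 * φ s 0 := by
    refine integral_congr_ae (Filter.Eventually.of_forall fun s => ?_)
    have hps : HasDerivAt (fun v => p s v) (deriv (fun v => p s v) 0) 0 :=
      ((contDiff_slice_snd hp s).differentiable (by simp) 0).hasDerivAt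
    have hmul : HasDerivAt (fun v : ℝ => v * p s v)
        (1 * p s 0 + 0 * deriv (fun v => p s v) 0) 0 := (hasDerivAt_id (0 : ℝ)).mul hps
    have hpd : pd (0, 1) (fun q : ℝ × ℝ => q.2 * p q.1 q.2) (s, 0) = p s 0 := by
      rw [← deriv_slice_snd hG4 s 0]
      show deriv (fun v => v * p s v) 0 = p s 0
      rw [hmul.deriv]
      simp
    show pd (0, 1) (fun q : ℝ × ℝ => q.2 * p q.1 q.2) (s, 0) * uncurry φ (s, 0) = p s 0 * φ s 0
    rw [hpd]
    rfl
  calc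
    (∫ s in Set.Ioi (0 : ℝ), ∫ b in Set.Ioi (0 : ℝ),
        p s b * (f₁ s b * deriv (fun u => φ u b) s
          + f₂ s b * deriv (fun v => φ s v) b
          + c₁ ^ 2 / 2 * s * deriv (fun u => deriv (fun u' => φ u' b) u) s
          + c₂ ^ 2 / 2 * b * deriv (fun v => deriv (fun v' => φ s v') v) b))
      = ∫ s in Set.Ioi (0 : ℝ), ∫ b in Set.Ioi (0 : ℝ),
          (f₁ s b * p s b * pd (1, 0) (uncurry φ) (s, b)
          + f₂ s b * p s b * pd (0, 1) (uncurry φ) (s, b)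
          + c₁ ^ 2 / 2 * (s * p s b * pd (1, 0) (pd (1, 0) (uncurry φ)) (s, b))
          + c₂ ^ 2 / 2 * (b * p s b * pd (0, 1) (pd (0, 1) (uncurry φ)) (s, b))) :=
        integral_congr_ae (Filter.Eventually.of_forall fun s =>
          integral_congr_ae (Filter.Eventually.of_forall fun b => hLpt s b))
    _ = ∫ q, (f₁ q.1 q.2 * p q.1 q.2 * pd (1, 0) (uncurry φ) q
          + f₂ q.1 q.2 * p q.1 q.2 * pd (0, 1) (uncurry φ) q
          + c₁ ^ 2 / 2 * (q.1 * p q.1 q.2 * pd (1, 0) (pd (1, 0) (uncurry φ)) q)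
          + c₂ ^ 2 / 2 * (q.2 * p q.1 q.2 * pd (0, 1) (pd (0, 1) (uncurry φ)) q))
          ∂((volume.restrict (Set.Ioi (0 : ℝ))).prod (volume.restrict (Set.Ioi (0 : ℝ)))) :=
        (MeasureTheory.integral_prod _ intL).symm
    _ = (∫ q, ((-(pd (1, 0) (fun q : ℝ × ℝ => f₁ q.1 q.2 * p q.1 q.2) q)
          - pd (0, 1) (fun q : ℝ × ℝ => f₂ q.1 q.2 * p q.1 q.2) q
          + c₁ ^ 2 / 2 * pd (1, 0) (pd (1, 0) (fun q : ℝ × ℝ => q.1 * p q.1 q.2)) q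
          + c₂ ^ 2 / 2 * pd (0, 1) (pd (0, 1) (fun q : ℝ × ℝ => q.2 * p q.1 q.2)) q)
          * uncurry φ q)
          ∂((volume.restrict (Set.Ioi (0 : ℝ))).prod (volume.restrict (Set.Ioi (0 : ℝ)))))
        + c₂ ^ 2 / 2 * ∫ s in Set.Ioi (0 : ℝ),
            pd (0, 1) (fun q : ℝ × ℝ => q.2 * p q.1 q.2) (s, 0) * uncurry φ (s, 0) := main
    _ = (∫ s in Set.Ioi (0 : ℝ), ∫ b in Set.Ioi (0 : ℝ),
          (-(pd (1, 0) (fun q : ℝ × ℝ => f₁ q.1 q.2 * p q.1 q.2) (s, b))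
            - pd (0, 1) (fun q : ℝ × ℝ => f₂ q.1 q.2 * p q.1 q.2) (s, b)
            + c₁ ^ 2 / 2 * pd (1, 0) (pd (1, 0) (fun q : ℝ × ℝ => q.1 * p q.1 q.2)) (s, b)
            + c₂ ^ 2 / 2 * pd (0, 1) (pd (0, 1) (fun q : ℝ × ℝ => q.2 * p q.1 q.2)) (s, b))
            * φ s b)
        + c₂ ^ 2 / 2 * ∫ s in Set.Ioi (0 : ℝ), p s 0 * φ s 0 := by
        rw [MeasureTheory.integral_prod _ intR, hbdry]
        rfl
    _ = (∫ s in Set.Ioi (0 : ℝ), ∫ b in Set.Ioi (0 : ℝ),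
          (-(deriv (fun u => f₁ u b * p u b) s)
            - deriv (fun v => f₂ s v * p s v) b
            + c₁ ^ 2 / 2 * deriv (fun u => deriv (fun u' => u' * p u' b) u) s
            + c₂ ^ 2 / 2 * deriv (fun v => deriv (fun v' => v' * p s v') v) b)
            * φ s b)
        + c₂ ^ 2 / 2 * ∫ s in Set.Ioi (0 : ℝ), p s 0 * φ s 0 := by
        have h5 := integral_congr_ae (μ := volume.restrict (Set.Ioi (0 : ℝ)))
          (Filter.Eventually.of_forall fun s : ℝ =>
            integral_congr_ae (μ := volume.restrict (Set.Ioi (0 : ℝ)))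
              (Filter.Eventually.of_forall fun b : ℝ => (hRpt s b).symm))
        exact congrArg (fun z => z + c₂ ^ 2 / 2 * ∫ s in Set.Ioi (0 : ℝ), p s 0 * φ s 0) h5
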